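/- arXiv:2407.15104 — 2 statements merged into one kernel-verified Lean document; each statement's English description precedes it below -/
import Mathlib

section
/- If C is a projective [n,k] code over GF(q) with generator matrix G having columns g₁,...,gₙ ∈ GF(q)^k, then for every weight w, the number of codewords of C(q|q^ℓ) of Hamming weight w equals the number of ℓ×k matrices B over GF(q) such that the kernel of B (as a subspace of GF(q)^k) intersects {g₁,...,gₙ} in exactly n−w elements. -/
open Finset

/-- Hamming weight of a vector. -/
noncomputable def wt {ι R : Type*} [Fintype ι] [Zero R] (c : ι → R) : ℕ :=
  Set.ncard {j | c j ≠ 0}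

/-- The lifted code `C(q|q^ℓ)`: the `E`-span of (the image in `E^n` of) a code `C ⊆ F^n`. -/
noncomputable def liftCode (F : Type*) {ι : Type*} (E : Type*) [Field F] [Field E] [Algebra F E]
    (C : Submodule F (ι → F)) : Submodule E (ι → E) :=
  Submodule.span E ((fun c : ι → F => fun j => algebraMap F E (c j)) '' (C : Set (ι → F)))

/-- `A_i(C)`: the number of codewords of Hamming weight `i`. -/
noncomputable def numWt {ι R : Type*} [Fintype ι] [Semiring R] (C : Submodule R (ι → R)) (i : ℕ) : ℕ :=
  Set.ncard {c : ι → R | c ∈ C ∧ wt c = i}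

/-- The set of supports of weight-`i` codewords of `C` (without repetition). -/
def codeSupports {ι R : Type*} [Fintype ι] [Semiring R] (C : Submodule R (ι → R)) (i : ℕ) :
    Set (Set ι) :=
  {s | ∃ c, c ∈ C ∧ wt c = i ∧ s = {j | c j ≠ 0}}

/-- `C` has minimum Hamming distance `d`. -/
def IsMinDist {ι R : Type*} [Fintype ι] [Semiring R] (C : Submodule R (ι → R)) (d : ℕ) : Prop :=
  (∃ c, c ∈ C ∧ c ≠ 0 ∧ wt c = d) ∧ ∀ c, c ∈ C → c ≠ 0 → d ≤ wt c

/-- The dual code under the standard bilinear form. -/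
def dualCode {ι R : Type*} [Fintype ι] [CommRing R] (C : Submodule R (ι → R)) :
    Submodule R (ι → R) where
  carrier := {x | ∀ c ∈ C, ∑ j, x j * c j = 0}
  add_mem' := by
    intro a b ha hb c hc
    simp only [Set.mem_setOf_eq] at *
    simp [Pi.add_apply, add_mul, Finset.sum_add_distrib, ha c hc, hb c hc]
  zero_mem' := by intro c hc; simp
  smul_mem' := by
    intro a x hx c hc
    simp only [Set.mem_setOf_eq] at *
    simp [Pi.smul_apply, smul_eq_mul, mul_assoc, ← Finset.mul_sum, hx c hc]

/-- Evaluation of multivariate polynomials over `GF(2)` as a linear map. -/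
noncomputable def evalLM (m : ℕ) :
    MvPolynomial (Fin m) (ZMod 2) →ₗ[ZMod 2] ((Fin m → ZMod 2) → ZMod 2) where
  toFun := fun p x => MvPolynomial.eval x p
  map_add' := by intro p q; funext x; simp
  map_smul' := by intro a p; funext x; simp

/-- The binary Reed-Muller code `RM₂(r,m)`: evaluations of polynomials of total degree `≤ r`. -/
noncomputable def RM (r m : ℕ) : Submodule (ZMod 2) ((Fin m → ZMod 2) → ZMod 2) :=
  Submodule.map (evalLM m) (MvPolynomial.restrictTotalDegree (Fin m) (ZMod 2) r)

/-! Fix an `F`-basis `b` of `E`. A vector `x ∈ E^k` is the same as an `ℓ × k` matrix `B` over `F`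
(column `i` holds the `b`-coordinates of `x i`), and the `j`-th entry of the codeword `x G` then has
`b`-coordinates `B g_j`. So `B ↦ x G` is a bijection from `ℓ × k` matrices onto the lifted code
(injective because the rows of `G` are independent), and the weight of `x G` is `n` minus the
number of columns `g_j` killed by `B`; as the columns are distinct, that number is the size of
`ker B ∩ {g₁, …, gₙ}`.

If `E` is infinite-dimensional over `F`, then `ℓ = finrank F E = 0`, and `E` is infinite, so for
`w ≠ 0` the weight-`w` codewords form an empty or infinite set, whose `Set.ncard` is `0`. -/

section Weight

variable {ι R : Type*} [Fintype ι]

lemma wt_eq_zero_iff [Zero R] {c : ι → R} : wt c = 0 ↔ c = 0 := by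
  rw [wt, Set.ncard_eq_zero, Set.eq_empty_iff_forall_notMem, funext_iff]
  simp

lemma wt_smul [MulZeroClass R] [NoZeroDivisors R] {a : R} (ha : a ≠ 0) (c : ι → R) :
    wt (a • c) = wt c := by
  simp [wt, ha]

lemma ncard_setOf_eq_zero_add_wt [Zero R] (c : ι → R) :
    {j | c j = 0}.ncard + wt c = Fintype.card ι := by
  rw [wt, ← Nat.card_eq_fintype_card]
  exact Set.ncard_add_ncard_compl _

lemma numWt_zero [Semiring R] (C : Submodule R (ι → R)) : numWt C 0 = 1 := by
  have : {c : ι → R | c ∈ C ∧ wt c = 0} = {0} := by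
    ext c
    simp only [Set.mem_ofPred_eq, wt_eq_zero_iff, Set.mem_singleton_iff, and_iff_right_iff_imp]
    rintro rfl
    exact C.zero_mem
  rw [numWt, this, Set.ncard_singleton]

lemma numWt_eq_zero_of_infinite [Field R] [Infinite R] (C : Submodule R (ι → R)) {w : ℕ}
    (hw : w ≠ 0) : numWt C w = 0 := by
  rcases Set.eq_empty_or_nonempty {c : ι → R | c ∈ C ∧ wt c = w} with h | ⟨c, hcC, hcw⟩
  · rw [numWt, h, Set.ncard_empty]
  have hc : c ≠ 0 := by
    rintro rfl
    exact hw (hcw ▸ wt_eq_zero_iff.mpr rfl)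
  refine Set.Infinite.ncard <| Set.infinite_of_injOn_mapsTo (smul_left_injective R hc).injOn
    (fun a ha => ⟨C.smul_mem a hcC, (wt_smul ha c).trans hcw⟩)
    (Set.finite_singleton (0 : R)).infinite_compl

end Weight

open Matrix

namespace Module.Basis

variable {ι F E κ ν : Type*} [Fintype ι]

section Semiring

variable [Semiring F] [AddCommMonoid E] [Module F E]

noncomputable def ofColumns (b : Basis ι F E) (M : Matrix ι ν F) : ν → E :=
  fun j => b.equivFun.symm (Mᵀ j)

variable (b : Basis ι F E)

lemma ofColumns_bijective : Function.Bijective (b.ofColumns : Matrix ι ν F → ν → E) :=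
  (b.equivFun.symm.bijective.comp_left (α := ν)).comp (transposeAddEquiv ι ν F).bijective

lemma ofColumns_eq_zero_iff (M : Matrix ι ν F) (j : ν) : b.ofColumns M j = 0 ↔ Mᵀ j = 0 :=
  b.equivFun.symm.map_eq_zero_iff

lemma wt_ofColumns [Fintype ν] (M : Matrix ι ν F) : wt (b.ofColumns M) = wt Mᵀ := by
  simp only [wt, ne_eq, ofColumns_eq_zero_iff]

end Semiring

lemma ofColumns_mul [Fintype κ] [CommSemiring F] [CommSemiring E] [Algebra F E]
    (b : Basis ι F E) (B : Matrix ι κ F) (G : Matrix κ ν F) :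
    b.ofColumns (B * G) = b.ofColumns B ᵥ* G.map (algebraMap F E) := by
  ext j
  simp only [ofColumns, vecMul, dotProduct, equivFun_symm_apply, Matrix.mul_apply,
    transpose_apply, Finset.sum_mul, Finset.sum_smul]
  rw [Finset.sum_comm]
  refine Finset.sum_congr rfl fun t _ => Finset.sum_congr rfl fun i _ => ?_
  rw [Matrix.map_apply, Algebra.smul_def, Algebra.smul_def, map_mul]
  ring

end Module.Basis

lemma Matrix.mem_span_range_row_iff {R m n : Type*} [CommSemiring R] [Fintype m]
    (M : Matrix m n R) {v : n → R} : v ∈ Submodule.span R (Set.range M.row) ↔ ∃ x, x ᵥ* M = v := by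
  rw [← range_vecMulLinear]
  rfl

lemma Matrix.mul_left_injective_of_linearIndependent_row {R l m n : Type*} [CommRing R]
    [Fintype m] {G : Matrix m n R} (hG : LinearIndependent R G.row) :
    Function.Injective fun B : Matrix l m R => B * G :=
  fun _ _ h => funext fun t => Matrix.vecMul_injective_iff.mpr hG (congrFun h t)

lemma ncard_setOf_mulVec_eq_zero_inter_range {F κ ν ι : Type*} [CommSemiring F] [Fintype κ]
    (B : Matrix ι κ F) {G : Matrix κ ν F} (hG : Function.Injective fun j i => G i j) :
    Set.ncard ({g : κ → F | B *ᵥ g = 0} ∩ Set.range fun j i => G i j)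
      = {j | (B * G)ᵀ j = 0}.ncard := by
  rw [← Set.image_preimage_eq_inter_range, Set.ncard_image_of_injective _ hG]
  rfl

theorem numWt_span_map_row_eq {F E ι κ ν : Type*} [Field F] [Field E] [Algebra F E]
    [Fintype ι] [Fintype κ] [Fintype ν] (b : Module.Basis ι F E) {G : Matrix κ ν F}
    (hG : LinearIndependent F G.row) (w : ℕ) :
    numWt (Submodule.span E (Set.range (G.map (algebraMap F E)).row)) w
      = {B : Matrix ι κ F | wt (B * G)ᵀ = w}.ncard := by
  have hmem : ∀ c, c ∈ Submodule.span E (Set.range (G.map (algebraMap F E)).row) ↔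
      ∃ B : Matrix ι κ F, b.ofColumns (B * G) = c := by
    intro c
    simp_rw [Matrix.mem_span_range_row_iff, b.ofColumns_bijective.surjective.exists,
      b.ofColumns_mul]
  have himage : {c | c ∈ Submodule.span E (Set.range (G.map (algebraMap F E)).row) ∧ wt c = w}
      = (fun B : Matrix ι κ F => b.ofColumns (B * G)) '' {B | wt (B * G)ᵀ = w} := by
    ext c
    simp only [Set.mem_ofPred_eq, hmem, Set.mem_image]
    constructor
    · rintro ⟨⟨B, rfl⟩, hw⟩
      exact ⟨B, by rwa [← b.wt_ofColumns], rfl⟩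
    · rintro ⟨B, hw, rfl⟩
      exact ⟨⟨B, rfl⟩, by rwa [b.wt_ofColumns]⟩
  rw [numWt, himage]
  exact Set.ncard_image_of_injective _
    (b.ofColumns_bijective.injective.comp (Matrix.mul_left_injective_of_linearIndependent_row hG))

theorem numWt_span_map_row_eq_of_isEmpty {F E ι κ ν : Type*} [Field F] [Field E] [Algebra F E]
    [Infinite E] [IsEmpty ι] [Fintype κ] [Fintype ν] (G : Matrix κ ν F) (w : ℕ) :
    numWt (Submodule.span E (Set.range (G.map (algebraMap F E)).row)) w
      = {B : Matrix ι κ F | wt (B * G)ᵀ = w}.ncard := by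
  have hwt : ∀ B : Matrix ι κ F, wt (B * G)ᵀ = 0 :=
    fun B => wt_eq_zero_iff.mpr (Subsingleton.elim _ _)
  rcases eq_or_ne w 0 with rfl | hw
  · simp only [hwt, Set.ofPred_true, numWt_zero, Set.ncard_univ]
    simp
  · simp only [hwt, hw.symm, Set.ofPred_false, Set.ncard_empty, numWt_eq_zero_of_infinite _ hw]

/-- for a projective `[n,k]` code with generator matrix `G` (columns `g₁,…,gₙ`),
`A_w(C(q|q^ℓ))` equals the number of `ℓ×k` matrices `B` over `F` whose kernel meets
`{g₁,…,gₙ}` in exactly `n-w` elements. -/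
theorem stmt4 {F E : Type*} [Field F] [Field E] [Algebra F E] {n k ℓ : ℕ}
    (G : Matrix (Fin k) (Fin n) F)
    (hrank : LinearIndependent F (fun i : Fin k => G i))
    (hproj : ∀ j1 j2 : Fin n, j1 ≠ j2 → ∀ a : F,
      (fun i => G i j1) ≠ a • (fun i => G i j2))
    (hE : Module.finrank F E = ℓ)
    (w : ℕ) (hw : w ≤ n) :
    numWt (Submodule.span E
        (Set.range fun i : Fin k => fun j : Fin n => algebraMap F E (G i j))) w
      = Set.ncard {B : Matrix (Fin ℓ) (Fin k) F |
          Set.ncard ({g : Fin k → F | B.mulVec g = 0} ∩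
            Set.range fun j : Fin n => fun i => G i j) = n - w} := by
  have hcol : Function.Injective fun j : Fin n => fun i => G i j := fun j1 j2 h => by
    by_contra hne
    exact hproj j1 j2 hne 1 (by simpa using h)
  have hkernel : ∀ B : Matrix (Fin ℓ) (Fin k) F,
      Set.ncard ({g : Fin k → F | B *ᵥ g = 0} ∩ Set.range fun j : Fin n => fun i => G i j)
        = n - w ↔ wt (B * G)ᵀ = w := by
    intro B
    have hcard := ncard_setOf_eq_zero_add_wt (B * G)ᵀ
    rw [Fintype.card_fin] at hcard
    rw [ncard_setOf_mulVec_eq_zero_inter_range B hcol]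
    omega
  simp_rw [hkernel]
  by_cases hfin : Module.Finite F E
  · exact numWt_span_map_row_eq (Module.finBasisOfFinrankEq F E hE) hrank w
  · have : Infinite E := not_finite_iff_infinite.mp fun _ => hfin inferInstance
    obtain rfl : ℓ = 0 := hE ▸ Module.finrank_of_not_finite hfin
    exact numWt_span_map_row_eq_of_isEmpty G w
end

section
/- For m ≥ 3, the lifted code S_{(q,m)}(q|q³) is a three-weight code with weight enumerator 1 + (q²+q+1)(q^m−1) z^{q^{m−1}} + (q²+q+1)(q^m−1)(q^m−q) z^{q^{m−1}+q^{m−2}} + (q^m−1)(q^m−q)(q^m−q²) z^{q^{m−1}+q^{m−2}+q^{m−3}}. -/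
open Finset

open Submodule Module Matrix

/-!
Fix an `F`-basis `b₁, b₂, b₃` of `E` and write a message `x ∈ E^m` as `x = ∑ₖ bₖ yₖ` with
`yₖ ∈ F^m`. Coordinate `j` of its codeword is `∑ₖ ⟨yₖ, gⱼ⟩ bₖ`, so it vanishes exactly when the
point `gⱼ` lies in the orthogonal complement of `span (y₁, y₂, y₃)`, a subspace of codimension
`r = rank y` containing `(q^(m-r) - 1)/(q - 1)` of the points. Hence the codeword has weight
`q^(m-1) + ⋯ + q^(m-r)`, and `A_w` counts the triples `y` of the corresponding rank: one of
rank 0, `(q^m-1)(q^m-q)(q^m-q²)` of rank 3, `(q²+q+1)(q^m-1)` of rank 1 (the triples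
`(a₁gⱼ, a₂gⱼ, a₃gⱼ)` with `a ≠ 0`), and the remaining ones of rank 2.
-/

section TupleRank

variable {F V ι : Type*} [Field F] [AddCommGroup V] [Module F V]

theorem finrank_range_eq_zero_iff [Finite ι] {y : ι → V} : (Set.range y).finrank F = 0 ↔ y = 0 := by
  have := FiniteDimensional.span_of_finite F (Set.finite_range y)
  rw [Set.finrank, Submodule.finrank_eq_zero, span_eq_bot, Set.forall_mem_range, funext_iff]
  rfl

theorem ncard_finrank_range_eq_zero [Finite ι] :
    {y : ι → V | (Set.range y).finrank F = 0}.ncard = 1 := by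
  simp [finrank_range_eq_zero_iff]

theorem ncard_finrank_range_eq_card [Fintype F] [Finite V] {k : ℕ} (hk : k ≤ finrank F V) :
    {y : Fin k → V | (Set.range y).finrank F = k}.ncard
      = ∏ i : Fin k, (Fintype.card F ^ finrank F V - Fintype.card F ^ (i : ℕ)) := by
  have hset : {y : Fin k → V | (Set.range y).finrank F = k} = {y | LinearIndependent F y} := by
    ext y
    rw [Set.mem_ofPred_eq, Set.mem_ofPred_eq, linearIndependent_iff_card_eq_finrank_span,
      Fintype.card_fin, eq_comm]
  rw [hset, ← card_linearIndependent hk, ← Nat.card_coe_set_eq]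
  rfl

theorem sum_ncard_finrank_range_eq [Fintype ι] [Fintype F] [Fintype V] :
    ∑ r ∈ Finset.range (Fintype.card ι + 1), {y : ι → V | (Set.range y).finrank F = r}.ncard
      = Fintype.card F ^ (finrank F V * Fintype.card ι) := by
  classical
  have hmaps : Set.MapsTo (fun y : ι → V => (Set.range y).finrank F) (Finset.univ : Finset (ι → V))
      (Finset.range (Fintype.card ι + 1)) := fun y _ =>
    Finset.mem_range_succ_iff.mpr (finrank_range_le_card y)
  rw [pow_mul, ← Module.card_eq_pow_finrank, ← Fintype.card_fun, ← Finset.card_univ (α := ι → V),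
    Finset.card_eq_sum_card_fiberwise hmaps]
  refine Finset.sum_congr rfl fun r _ => ?_
  rw [← Set.ncard_coe_finset, Finset.coe_filter_univ]

end TupleRank

def simplexWeight (q m r : ℕ) : ℕ := ∑ t ∈ Finset.range r, q ^ (m - 1 - t)

theorem sub_one_mul_simplexWeight {q m r : ℕ} (hq : 1 ≤ q) (hr : r ≤ m) :
    (q - 1) * simplexWeight q m r = q ^ m - q ^ (m - r) := by
  induction r with
  | zero => simp [simplexWeight]
  | succ r ih =>
    have hstep : q ^ (m - r) = q * q ^ (m - (r + 1)) := by
      rw [← pow_succ', show m - (r + 1) + 1 = m - r by omega]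
    have hle : q ^ (m - r) ≤ q ^ m := Nat.pow_le_pow_right hq (by omega)
    rw [simplexWeight, Finset.sum_range_succ, ← simplexWeight, mul_add, ih (by omega),
      show m - 1 - r = m - (r + 1) by omega]
    rw [hstep] at hle ⊢
    zify [hq, hle, (Nat.le_mul_of_pos_left _ hq).trans hle]
    ring

theorem simplexWeight_strictMono {q m : ℕ} (hq : 1 ≤ q) : StrictMono (simplexWeight q m) :=
  strictMono_nat_of_lt_succ fun r => by
    rw [simplexWeight, simplexWeight, Finset.sum_range_succ]
    exact Nat.lt_add_of_pos_right (Nat.pow_pos hq)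

def IsProjectivePointReps (F : Type*) {V J : Type*} [Field F] [AddCommGroup V] [Module F V]
    (g : J → V) : Prop :=
  (∀ j, g j ≠ 0) ∧ ∀ v : V, v ≠ 0 → ∃! j, ∃ a : F, v = a • g j

namespace IsProjectivePointReps

variable {F V J : Type*} [Field F] [AddCommGroup V] [Module F V] {g : J → V}

theorem smul_injective (hg : IsProjectivePointReps F g) {i j : J} {a b : F} (ha : a ≠ 0)
    (h : a • g i = b • g j) : i = j ∧ a = b := by
  have hv : a • g i ≠ 0 := smul_ne_zero ha (hg.1 i)
  have hij : i = j := (hg.2 _ hv).unique ⟨a, rfl⟩ ⟨b, h⟩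
  subst hij
  exact ⟨rfl, smul_left_injective F (hg.1 i) h⟩

theorem exists_smul_eq (hg : IsProjectivePointReps F g) {v : V} (hv : v ≠ 0) :
    ∃ j, ∃ a : F, a ≠ 0 ∧ a • g j = v := by
  obtain ⟨j, a, rfl⟩ := (hg.2 v hv).exists
  exact ⟨j, a, left_ne_zero_of_smul hv, rfl⟩

theorem sub_one_mul_ncard_mem [Fintype F] [Fintype V] (hg : IsProjectivePointReps F g)
    (K : Submodule F V) :
    (Fintype.card F - 1) * {j | g j ∈ K}.ncard = Fintype.card F ^ finrank F K - 1 := by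
  classical
  have himage : (fun p : J × Fˣ => (p.2 : F) • g p.1) '' ({j | g j ∈ K} ×ˢ Set.univ)
      = (K : Set V) \ {0} := by
    ext v
    constructor
    · rintro ⟨⟨j, u⟩, ⟨hj, -⟩, rfl⟩
      exact ⟨K.smul_mem _ hj, smul_ne_zero u.ne_zero (hg.1 j)⟩
    · rintro ⟨hvK, hv⟩
      obtain ⟨j, a, ha, rfl⟩ := hg.exists_smul_eq hv
      refine ⟨⟨j, Units.mk0 a ha⟩, ⟨?_, trivial⟩, rfl⟩
      simpa [smul_smul, ha] using K.smul_mem a⁻¹ hvK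
  have hinj : Set.InjOn (fun p : J × Fˣ => (p.2 : F) • g p.1) ({j | g j ∈ K} ×ˢ Set.univ) := by
    rintro ⟨i, u⟩ - ⟨j, w⟩ - h
    obtain ⟨rfl, huw⟩ := hg.smul_injective u.ne_zero h
    simp [Units.val_inj.mp huw]
  have hcard := congrArg Set.ncard himage
  rw [hinj.ncard_image, Set.ncard_prod, Set.ncard_univ, Nat.card_units, Nat.card_eq_fintype_card,
    Set.ncard_sdiff_singleton_of_mem K.zero_mem, ← Nat.card_coe_set_eq (K : Set V),
    SetLike.coe_sort_coe, Nat.card_eq_fintype_card, Module.card_eq_pow_finrank (K := F) (V := K)]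
    at hcard
  rw [mul_comm, hcard]

theorem finrank_range_eq_one_iff {ι : Type*} (hg : IsProjectivePointReps F g) (y : ι → V) :
    (Set.range y).finrank F = 1 ↔ ∃ j, ∃ a : ι → F, a ≠ 0 ∧ y = fun k => a k • g j := by
  constructor
  · intro h
    obtain ⟨⟨v, hvmem⟩, hv, hspan⟩ := finrank_eq_one_iff'.mp h
    obtain ⟨j, c, -, rfl⟩ := hg.exists_smul_eq (v := v) (by simpa using hv)
    have hy : ∀ k, ∃ d : F, d • g j = y k := fun k => by
      obtain ⟨d, hd⟩ := hspan ⟨y k, subset_span (Set.mem_range_self k)⟩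
      exact ⟨d * c, by simpa [mul_smul] using congrArg Subtype.val hd⟩
    choose a ha using hy
    refine ⟨j, a, ?_, funext fun k => (ha k).symm⟩
    rintro rfl
    have : span F (Set.range y) = ⊥ :=
      span_eq_bot.mpr (by rintro _ ⟨k, rfl⟩; simp [← ha k])
    rw [Set.finrank, this, finrank_bot] at h
    exact zero_ne_one h
  · rintro ⟨j, a, ha, rfl⟩
    obtain ⟨k, hk⟩ := Function.ne_iff.mp ha
    have hspan : span F (Set.range fun k => a k • g j) = F ∙ g j := by
      refine le_antisymm (span_le.mpr (Set.range_subset_iff.mpr fun l =>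
        smul_mem _ _ (mem_span_singleton_self _))) (span_singleton_le_iff_mem _ _ |>.mpr ?_)
      simpa [smul_smul, inv_mul_cancel₀ hk] using smul_mem _ (a k)⁻¹
        (subset_span (Set.mem_range_self (f := fun l => a l • g j) k))
    rw [Set.finrank, hspan, finrank_span_singleton (hg.1 j)]

theorem sub_one_mul_ncard_finrank_range_eq_one {ι : Type*} [Fintype ι] [Fintype F] [Fintype V]
    (hg : IsProjectivePointReps F g) :
    (Fintype.card F - 1) * {y : ι → V | (Set.range y).finrank F = 1}.ncard
      = (Fintype.card F ^ finrank F V - 1) * (Fintype.card F ^ Fintype.card ι - 1) := by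
  classical
  have himage : {y : ι → V | (Set.range y).finrank F = 1}
      = (fun p : J × (ι → F) => fun k => p.2 k • g p.1) '' (Set.univ ×ˢ {a | a ≠ 0}) := by
    ext y
    simp only [Set.mem_ofPred_eq, hg.finrank_range_eq_one_iff, Set.mem_image, Set.mem_prod,
      Set.mem_univ, true_and, Prod.exists]
    exact exists_congr fun j => exists_congr fun a => by rw [eq_comm]
  have hinj : Set.InjOn (fun p : J × (ι → F) => fun k => p.2 k • g p.1)
      (Set.univ ×ˢ {a | a ≠ 0}) := by
    rintro ⟨i, a⟩ ⟨-, ha⟩ ⟨j, b⟩ - h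
    obtain ⟨k, hk⟩ := Function.ne_iff.mp ha
    obtain ⟨rfl, -⟩ := hg.smul_injective hk (congrFun h k)
    exact Prod.ext rfl (funext fun l => smul_left_injective F (hg.1 i) (congrFun h l))
  have hpoints := hg.sub_one_mul_ncard_mem (⊤ : Submodule F V)
  simp only [mem_top, Set.ofPred_true, finrank_top] at hpoints
  rw [himage, hinj.ncard_image, Set.ncard_prod, ← mul_assoc, hpoints]
  simp [Set.ncard_eq_toFinset_card', Finset.filter_ne']

theorem sub_one_mul_ncard_mulVec_ne_zero {ι : Type*} [Fintype ι] [Fintype F] [Finite J] {m : ℕ}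
    {g : J → Fin m → F} (hg : IsProjectivePointReps F g) (y : ι → Fin m → F) :
    (Fintype.card F - 1) * {j | Matrix.of y *ᵥ g j ≠ 0}.ncard
      = Fintype.card F ^ m - Fintype.card F ^ (m - (Set.range y).finrank F) := by
  set K := LinearMap.ker (Matrix.of y).mulVecLin
  have hset : {j | Matrix.of y *ᵥ g j ≠ 0} = {j | g j ∈ K}ᶜ := by
    ext j
    simp [K]
  have hK : finrank F K = m - (Set.range y).finrank F := by
    have := LinearMap.finrank_range_add_finrank_ker (Matrix.of y).mulVecLin
    rw [← Matrix.rank, Matrix.rank_eq_finrank_span_row, finrank_fin_fun] at this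
    change (Set.range y).finrank F + finrank F K = m at this
    omega
  have hpoints := hg.sub_one_mul_ncard_mem K
  have hall := hg.sub_one_mul_ncard_mem (⊤ : Submodule F (Fin m → F))
  simp only [mem_top, Set.ofPred_true, finrank_top, Set.ncard_univ, finrank_fin_fun] at hall
  have hpos : 1 ≤ Fintype.card F ^ (m - (Set.range y).finrank F) :=
    Nat.one_le_pow _ _ Fintype.card_pos
  rw [hset, Set.ncard_compl, Nat.mul_sub, hall, hpoints, hK]
  omega

end IsProjectivePointReps

section LiftedSimplex

variable {F E ι : Type*} [Field F] [Field E] [Algebra F E] [Fintype ι]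

noncomputable def coordTuples (b : Basis ι F E) (m : ℕ) : (Fin m → E) ≃ (ι → Fin m → F) :=
  (LinearEquiv.piCongrRight fun _ => b.equivFun).toEquiv.trans (Equiv.piComm _)

theorem equivFun_sum_smul_lift (b : Basis ι F E) {m n : ℕ} (g : Fin n → Fin m → F)
    (x : Fin m → E) (j : Fin n) :
    b.equivFun ((∑ i, x i • fun j => algebraMap F E (g j i)) j)
      = Matrix.of (coordTuples b m x) *ᵥ g j := by
  ext k
  simp only [Finset.sum_apply, Pi.smul_apply, smul_eq_mul, map_sum, Basis.equivFun_apply,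
    Matrix.mulVec, dotProduct, Matrix.of_apply]
  refine Finset.sum_congr rfl fun i _ => ?_
  rw [mul_comm, ← Algebra.smul_def, map_smul, Finsupp.smul_apply, smul_eq_mul, mul_comm]
  rfl

theorem wt_sum_smul_lift [Fintype F] {m n : ℕ} {g : Fin n → Fin m → F}
    (hg : IsProjectivePointReps F g) (b : Basis ι F E) (x : Fin m → E) :
    wt (∑ i, x i • fun j => algebraMap F E (g j i))
      = simplexWeight (Fintype.card F) m ((Set.range (coordTuples b m x)).finrank F) := by
  have hq : 1 < Fintype.card F := Fintype.one_lt_card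
  have hsupp : {j | (∑ i, x i • fun j => algebraMap F E (g j i)) j ≠ 0}
      = {j | Matrix.of (coordTuples b m x) *ᵥ g j ≠ 0} := by
    ext j
    simp only [Set.mem_ofPred_eq, ← equivFun_sum_smul_lift, ne_eq, LinearEquiv.map_eq_zero_iff]
  refine Nat.eq_of_mul_eq_mul_left (Nat.sub_pos_of_lt hq) ?_
  rw [wt, hsupp, hg.sub_one_mul_ncard_mulVec_ne_zero, sub_one_mul_simplexWeight hq.le]
  exact (Submodule.finrank_le _).trans_eq (finrank_fin_fun F)

theorem numWt_span_lift [Fintype F] {m n : ℕ} {g : Fin n → Fin m → F}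
    (hg : IsProjectivePointReps F g) (b : Basis ι F E) (w : ℕ) :
    numWt (span E (Set.range fun i : Fin m => fun j : Fin n => algebraMap F E (g j i))) w
      = {y : ι → Fin m → F |
          simplexWeight (Fintype.card F) m ((Set.range y).finrank F) = w}.ncard := by
  set φ := Fintype.linearCombination E fun i : Fin m => fun j : Fin n => algebraMap F E (g j i)
  have hwt : ∀ x, wt (φ x)
      = simplexWeight (Fintype.card F) m ((Set.range (coordTuples b m x)).finrank F) := fun x => by
    rw [Fintype.linearCombination_apply, wt_sum_smul_lift hg b]
  have hinj : Function.Injective φ := by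
    rw [← LinearMap.ker_eq_bot, LinearMap.ker_eq_bot']
    intro x hx
    have hrank := hwt x
    rw [hx, show wt (0 : Fin n → E) = simplexWeight (Fintype.card F) m 0 by
      simp [wt, simplexWeight]] at hrank
    have := (simplexWeight_strictMono Fintype.card_pos).injective hrank.symm
    rw [finrank_range_eq_zero_iff] at this
    exact (coordTuples b m).injective (this.trans (by ext; simp [coordTuples, Function.swap]))
  have hcodewords : {c | c ∈ span E (Set.range fun i : Fin m => fun j : Fin n =>
      algebraMap F E (g j i)) ∧ wt c = w} = φ '' {x | wt (φ x) = w} := by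
    rw [← Fintype.range_linearCombination]
    ext c
    simp only [Set.mem_ofPred_eq, LinearMap.mem_range, Set.mem_image]
    constructor
    · rintro ⟨⟨x, rfl⟩, h⟩
      exact ⟨x, h, rfl⟩
    · rintro ⟨x, h, rfl⟩
      exact ⟨⟨x, rfl⟩, h⟩
  simp_rw [numWt, hcodewords, Set.ncard_image_of_injective _ hinj, hwt]
  rw [← Set.ncard_preimage_of_injective_subset_range (coordTuples b m).injective (by simp)]
  rfl

end LiftedSimplex

section Triples

variable {F : Type*} [Field F] [Fintype F] {m : ℕ}

theorem ncard_fin_three_finrank_range_eq_one {n : ℕ} {g : Fin n → Fin m → F}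
    (hg : IsProjectivePointReps F g) :
    {y : Fin 3 → Fin m → F | (Set.range y).finrank F = 1}.ncard
      = (Fintype.card F ^ 2 + Fintype.card F + 1) * (Fintype.card F ^ m - 1) := by
  have hq : 1 < Fintype.card F := Fintype.one_lt_card
  have h := hg.sub_one_mul_ncard_finrank_range_eq_one (ι := Fin 3)
  rw [finrank_fin_fun, Fintype.card_fin] at h
  refine Nat.eq_of_mul_eq_mul_left (Nat.sub_pos_of_lt hq) (h.trans ?_)
  have h1 : 1 ≤ Fintype.card F ^ m := Nat.one_le_pow _ _ Fintype.card_pos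
  have h3 : 1 ≤ Fintype.card F ^ 3 := Nat.one_le_pow _ _ Fintype.card_pos
  zify [h1, h3, hq.le]
  ring

theorem ncard_fin_three_finrank_range_eq_three (hm : 3 ≤ m) :
    {y : Fin 3 → Fin m → F | (Set.range y).finrank F = 3}.ncard
      = (Fintype.card F ^ m - 1) * (Fintype.card F ^ m - Fintype.card F) *
        (Fintype.card F ^ m - Fintype.card F ^ 2) := by
  rw [ncard_finrank_range_eq_card (by rwa [finrank_fin_fun]), finrank_fin_fun,
    Fin.prod_univ_three]
  simp

theorem ncard_fin_three_finrank_range_eq_two (hm : 3 ≤ m) {n : ℕ} {g : Fin n → Fin m → F}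
    (hg : IsProjectivePointReps F g) :
    {y : Fin 3 → Fin m → F | (Set.range y).finrank F = 2}.ncard
      = (Fintype.card F ^ 2 + Fintype.card F + 1) * (Fintype.card F ^ m - 1) *
        (Fintype.card F ^ m - Fintype.card F) := by
  have htotal := sum_ncard_finrank_range_eq (F := F) (V := Fin m → F) (ι := Fin 3)
  simp only [Fintype.card_fin, Finset.sum_range_succ, Finset.sum_range_zero, zero_add,
    finrank_fin_fun, ncard_finrank_range_eq_zero, ncard_fin_three_finrank_range_eq_one hg,
    ncard_fin_three_finrank_range_eq_three hm] at htotal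
  set q := Fintype.card F
  have h1 : 1 ≤ q ^ m := Nat.one_le_pow _ _ Fintype.card_pos
  have h2 : q ≤ q ^ m := Nat.le_self_pow (by omega) _
  have h3 : q ^ 2 ≤ q ^ m := Nat.pow_le_pow_right Fintype.card_pos (by omega)
  have hsum : 1 + (q ^ 2 + q + 1) * (q ^ m - 1) + (q ^ 2 + q + 1) * (q ^ m - 1) * (q ^ m - q)
      + (q ^ m - 1) * (q ^ m - q) * (q ^ m - q ^ 2) = q ^ (m * 3) := by
    zify [h1, h2, h3]
    ring
  omega

end Triples

/-- for `m ≥ 3` the lifted Simplex code over `GF(q³)` is a three-weight code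
with weight enumerator `1 + (q²+q+1)(q^m-1) z^{q^{m-1}}
+ (q²+q+1)(q^m-1)(q^m-q) z^{q^{m-1}+q^{m-2}}
+ (q^m-1)(q^m-q)(q^m-q²) z^{q^{m-1}+q^{m-2}+q^{m-3}}`. -/
theorem stmt13 {F E : Type*} [Field F] [Field E] [Algebra F E] [Fintype F] [Fintype E]
    {m n  : ℕ} (hm : 3 ≤ m) 
    (hE : Fintype.card E = Fintype.card F ^ 3)
    (g : Fin n → (Fin m → F)) (hg0 : ∀ i, g i ≠ 0)
    (hg : ∀ v : Fin m → F, v ≠ 0 → ∃! i : Fin n, ∃ a : F, v = a • g i)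
    (S : Submodule E (Fin n → E))
    (hS : S = Submodule.span E
      (Set.range fun i : Fin m => fun j : Fin n => algebraMap F E (g j i))) :
    numWt S 0 = 1 ∧
    numWt S (Fintype.card F ^ (m - 1))
      = (Fintype.card F ^ 2 + Fintype.card F + 1) * (Fintype.card F ^ m - 1) ∧
    numWt S (Fintype.card F ^ (m - 1) + Fintype.card F ^ (m - 2))
      = (Fintype.card F ^ 2 + Fintype.card F + 1) * (Fintype.card F ^ m - 1) *
        (Fintype.card F ^ m - Fintype.card F) ∧
    numWt S (Fintype.card F ^ (m - 1) + Fintype.card F ^ (m - 2) + Fintype.card F ^ (m - 3))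
      = (Fintype.card F ^ m - 1) * (Fintype.card F ^ m - Fintype.card F) *
        (Fintype.card F ^ m - Fintype.card F ^ 2) ∧
    ∀ i, i ≠ 0 → i ≠ Fintype.card F ^ (m - 1) →
      i ≠ Fintype.card F ^ (m - 1) + Fintype.card F ^ (m - 2) →
      i ≠ Fintype.card F ^ (m - 1) + Fintype.card F ^ (m - 2) + Fintype.card F ^ (m - 3) →
      numWt S i = 0 := by
  subst hS
  have hpoints : IsProjectivePointReps F g := ⟨hg0, hg⟩
  have : Module.Finite F E := Module.Finite.of_finite
  have hE3 : finrank F E = 3 := Nat.pow_right_injective Fintype.one_lt_card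
    (show Fintype.card F ^ finrank F E = Fintype.card F ^ 3 by
      rw [← Module.card_eq_pow_finrank, hE])
  have hnum := numWt_span_lift hpoints (Module.finBasisOfFinrankEq F E hE3)
  have hweight : ∀ r w, simplexWeight (Fintype.card F) m r = w →
      numWt (span E (Set.range fun i : Fin m => fun j : Fin n => algebraMap F E (g j i))) w
        = {y : Fin 3 → Fin m → F | (Set.range y).finrank F = r}.ncard := by
    rintro r w rfl
    rw [hnum]
    simp only [(simplexWeight_strictMono Fintype.card_pos).injective.eq_iff]
  refine ⟨?_, ?_, ?_, ?_, fun i h0 h1 h2 h3 => ?_⟩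
  · rw [hweight 0 0 rfl, ncard_finrank_range_eq_zero]
  · rw [hweight 1 _ (by simp [simplexWeight]), ncard_fin_three_finrank_range_eq_one hpoints]
  · rw [hweight 2 _ (by simp [simplexWeight, Finset.sum_range_succ, Nat.sub_sub]),
      ncard_fin_three_finrank_range_eq_two hm hpoints]
  · rw [hweight 3 _ (by simp [simplexWeight, Finset.sum_range_succ, Nat.sub_sub]),
      ncard_fin_three_finrank_range_eq_three hm]
  · rw [hnum, Set.ncard_eq_zero, Set.eq_empty_iff_forall_notMem]
    intro y hy
    rw [Set.mem_ofPred_eq] at hy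
    have hrank : (Set.range y).finrank F ≤ 3 :=
      (finrank_range_le_card y).trans_eq (Fintype.card_fin 3)
    generalize (Set.range y).finrank F = r at hy hrank
    interval_cases r <;> simp [simplexWeight, Finset.sum_range_succ, Nat.sub_sub] at hy <;> omega
end
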